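/- Let T ∈ cv(F) with volume entropy h = h(T), and let μ_T be a Patterson-Sullivan current for T, so that there exist constants C₁ > C₂ > 0 with C₂·exp(−h·d_T(x,y)) ≤ μ_T(Cyl_{[x,y]}) ≤ C₁·exp(−h·d_T(x,y)) for all distinct vertices x,y of T. Then μ_T is tame and h_T(μ_T) = h(T). -/

import Mathlib

open Filter MeasureTheory Topology

/-- An abstract model of a point `T` of the unprojectivized Outer space `cv(F)` of a
free group `G = F`: an ℝ-tree `X` with a minimal free discrete isometric cocompact
(cobounded) action of `G`, together with the two-sided cylinder subsets of the double
boundary `B = ∂²F` (on which `G` acts by `bact`) determined by oriented geodesic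
segments `[x,y]` of the tree.  The condition
`dist a x + dist x y + dist y b = dist a b` expresses that `[x,y] ⊆ [a,b]` with
matching orientation. -/
structure CVTree (G : Type) [Group G] (B : Type) (bact : G → B → B) : Type 1 where
  X : Type
  nonempty : Nonempty X
  dist : X → X → ℝ
  dist_self : ∀ x, dist x x = 0
  dist_comm : ∀ x y, dist x y = dist y x
  dist_triangle : ∀ x y z, dist x z ≤ dist x y + dist y z
  eq_of_dist_eq_zero : ∀ x y, dist x y = 0 → x = y
  act : G → X → X
  act_one : ∀ x, act 1 x = x
  act_mul : ∀ g h x, act (g * h) x = act g (act h x)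
  act_isom : ∀ g x y, dist (act g x) (act g y) = dist x y
  act_free : ∀ g x, act g x = x → g = 1
  cobounded : ∃ x0 : X, ∃ R : ℝ, ∀ y : X, ∃ g : G, dist y (act g x0) ≤ R
  cyl : X → X → Set B
  cyl_mono : ∀ a x y b, dist a x + dist x y + dist y b = dist a b → cyl a b ⊆ cyl x y
  cyl_act : ∀ g x y, cyl (act g x) (act g y) = bact g '' cyl x y

namespace CVTree

variable {G B : Type} [Group G] [MeasurableSpace B] {bact : G → B → B}

/-- The mass `μ(Cyl_{[x,y]})` of the two-sided cylinder of the segment `[x,y]`. -/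
noncomputable def cylMass (T : CVTree G B bact) (μ : Measure B) (x y : T.X) : ℝ :=
  (μ (T.cyl x y)).toReal

/-- A geodesic current: a `G`-invariant measure on `∂²F = B`, finite on cylinders. -/
def IsCurrent (T : CVTree G B bact) (μ : Measure B) : Prop :=
  (∀ (g : G) (s : Set B), μ (bact g ⁻¹' s) = μ s) ∧ ∀ x y : T.X, μ (T.cyl x y) ≠ ⊤

/-- The geometric entropy `h_T(μ) = liminf_{d_T(x,y)→∞} (−log μ(Cyl_{[x,y]}))/d_T(x,y)`
(the liminf is taken over the cylinders of positive mass, the cylinders of zero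
mass contributing the value `+∞` which does not affect the liminf). -/
noncomputable def geomEntropy (T : CVTree G B bact) (μ : Measure B) : ℝ :=
  Filter.liminf
    (fun p : T.X × T.X => -Real.log (T.cylMass μ p.1 p.2) / T.dist p.1 p.2)
    ((Filter.comap (fun p : T.X × T.X => T.dist p.1 p.2) Filter.atTop) ⊓
      Filter.principal {p : T.X × T.X | μ (T.cyl p.1 p.2) ≠ 0})

/-- The translation length `‖g‖_T = inf_{x ∈ T} d_T(x, gx)`. -/
noncomputable def translationLength (T : CVTree G B bact) (g : G) : ℝ :=
  ⨅ x : T.X, T.dist x (T.act g x)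

/-- The volume entropy `h(T) = lim_{R→∞} log #{g : d_T(x₀,gx₀) ≤ R}/R`
(independent of the basepoint `x₀`). -/
def HasVolEntropy (T : CVTree G B bact) (h : ℝ) : Prop :=
  ∀ x0 : T.X,
    Filter.Tendsto
      (fun R : ℝ => Real.log (Nat.card {g : G // T.dist x0 (T.act g x0) ≤ R}) / R)
      Filter.atTop (nhds h)

/-- Tameness of a current with respect to the tree `T`. -/
def Tame (T : CVTree G B bact) (μ : Measure B) : Prop :=
  ∀ M : ℝ, 1 ≤ M → ∃ C : ℝ, 1 ≤ C ∧ ∀ a₁ b₁ a₂ b₂ : T.X,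
    T.dist a₁ a₂ ≤ M → T.dist b₁ b₂ ≤ M → a₁ ≠ b₁ → a₂ ≠ b₂ →
    (1 / C) * T.cylMass μ a₂ b₂ ≤ T.cylMass μ a₁ b₁ ∧
      T.cylMass μ a₁ b₁ ≤ C * T.cylMass μ a₂ b₂

/-- A Patterson–Sullivan current for `T` with volume entropy `h`: a current whose
cylinder masses satisfy the two-sided exponential estimate
`C₂ e^{−h d_T(x,y)} ≤ μ(Cyl_{[x,y]}) ≤ C₁ e^{−h d_T(x,y)}`. -/
def IsPattersonSullivan (T : CVTree G B bact) (μ : Measure B) (h : ℝ) : Prop :=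
  T.IsCurrent μ ∧ ∃ C₁ C₂ : ℝ, 0 < C₂ ∧ C₂ < C₁ ∧ ∀ x y : T.X, x ≠ y →
    C₂ * Real.exp (-h * T.dist x y) ≤ T.cylMass μ x y ∧
      T.cylMass μ x y ≤ C₁ * Real.exp (-h * T.dist x y)

/-- An `F`-equivariant quasi-isometry between two trees in `cv(F)`. -/
def IsEquivariantQI (T T' : CVTree G B bact) (φ : T.X → T'.X) : Prop :=
  (∀ (g : G) (x : T.X), φ (T.act g x) = T'.act g (φ x)) ∧
  ∃ L : ℝ, 1 ≤ L ∧
    (∀ x y : T.X, (1 / L) * T.dist x y - L ≤ T'.dist (φ x) (φ y) ∧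
      T'.dist (φ x) (φ y) ≤ L * T.dist x y + L) ∧
    ∀ y : T'.X, ∃ x : T.X, T'.dist (φ x) y ≤ L

end CVTree

/-! The Patterson–Sullivan estimate says that `μ(Cyl_{[x,y]})` equals `e^{-h d(x,y)}` up to
a bounded multiplicative error. Moving the endpoints of a segment by at most `M` changes its
length by at most `2M`, hence changes the mass of its cylinder by a factor at most
`(C₁ / C₂) e^{2M|h|}`: this is tameness. Taking logarithms, `-log μ(Cyl_{[x,y]}) / d(x,y)`
differs from `h` by `O(1 / d(x,y))`, so it tends to `h` as `d(x,y) → ∞`. When the tree has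
bounded diameter both sides vanish: the liminf is over the empty filter, and every element
of the group moves the basepoint a bounded distance, so the orbit count is eventually
constant and the volume entropy is `0`. -/

namespace CVTree

variable {G B : Type} [Group G] {bact : G → B → B} (T : CVTree G B bact)

lemma ne_of_dist_pos {x y : T.X} (hd : 0 < T.dist x y) : x ≠ y := by
  rintro rfl
  exact hd.ne' (T.dist_self x)

lemma abs_dist_sub_dist_le (a₁ b₁ a₂ b₂ : T.X) :
    |T.dist a₁ b₁ - T.dist a₂ b₂| ≤ T.dist a₁ a₂ + T.dist b₁ b₂ := by
  rw [abs_le]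
  constructor
  · linarith [T.dist_triangle a₂ a₁ b₂, T.dist_triangle a₁ b₁ b₂, T.dist_comm a₁ a₂]
  · linarith [T.dist_triangle a₁ a₂ b₁, T.dist_triangle a₂ b₂ b₁, T.dist_comm b₂ b₁]

lemma HasVolEntropy.eq_zero_of_dist_lt {h D : ℝ} (hvol : T.HasVolEntropy h)
    (hD : ∀ x y : T.X, T.dist x y < D) : h = 0 := by
  obtain ⟨x0⟩ := T.nonempty
  have hcount : ∀ᶠ R in atTop,
      Real.log (Nat.card {g : G // T.dist x0 (T.act g x0) ≤ R}) / R =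
        Real.log (Nat.card G) / R := by
    filter_upwards [eventually_ge_atTop D] with R hR
    rw [Nat.card_congr (Equiv.subtypeUnivEquiv fun g => (hD _ _).le.trans hR)]
  refine tendsto_nhds_unique (hvol x0) ?_
  exact (tendsto_const_nhds.div_atTop tendsto_id).congr' (hcount.mono fun _ => Eq.symm)

variable [MeasurableSpace B]

lemma geomEntropy_eq_zero_of_dist_lt {μ : Measure B} {D : ℝ}
    (hD : ∀ x y : T.X, T.dist x y < D) : T.geomEntropy μ = 0 := by
  have hbot : comap (fun p : T.X × T.X => T.dist p.1 p.2) atTop = ⊥ :=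
    empty_mem_iff_bot.mp (mem_comap.mpr ⟨Set.Ici D, Ici_mem_atTop D,
      fun p hp => (not_le.mpr (hD p.1 p.2) hp).elim⟩)
  rw [geomEntropy, hbot, bot_inf_eq, liminf_eq]
  simp only [eventually_bot, Set.ofPred_true, Real.sSup_univ]

lemma neBot_of_dist_unbounded {μ : Measure B}
    (hμ : ∀ x y : T.X, x ≠ y → μ (T.cyl x y) ≠ 0)
    (hub : ∀ R : ℝ, ∃ x y : T.X, R ≤ T.dist x y) :
    (comap (fun p : T.X × T.X => T.dist p.1 p.2) atTop ⊓
      𝓟 {p : T.X × T.X | μ (T.cyl p.1 p.2) ≠ 0}).NeBot := by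
  rw [inf_principal_neBot_iff]
  rintro U ⟨t, ht, hsub⟩
  obtain ⟨R, hR⟩ := mem_atTop_sets.mp ht
  obtain ⟨x, y, hxy⟩ := hub (max R 1)
  have hpos : 0 < T.dist x y := zero_lt_one.trans_le ((le_max_right _ _).trans hxy)
  exact ⟨(x, y), hsub (hR _ ((le_max_left _ _).trans hxy)),
    hμ x y (T.ne_of_dist_pos hpos)⟩

section CylMassBounds

def CylMassExpBounds (μ : Measure B) (h C₁ C₂ : ℝ) : Prop :=
  ∀ x y : T.X, x ≠ y → C₂ * Real.exp (-h * T.dist x y) ≤ T.cylMass μ x y ∧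
    T.cylMass μ x y ≤ C₁ * Real.exp (-h * T.dist x y)

variable {μ : Measure B} {h C₁ C₂ : ℝ}

lemma cylMass_pos (hC₂ : 0 < C₂) (hbd : T.CylMassExpBounds μ h C₁ C₂)
    {x y : T.X} (hxy : x ≠ y) : 0 < T.cylMass μ x y :=
  lt_of_lt_of_le (by positivity) (hbd x y hxy).1

lemma cylMass_le_mul_cylMass (hC₂ : 0 < C₂) (hbd : T.CylMassExpBounds μ h C₁ C₂)
    {a₁ b₁ a₂ b₂ : T.X} (h₁ : a₁ ≠ b₁) (h₂ : a₂ ≠ b₂) :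
    T.cylMass μ a₁ b₁ ≤
      C₁ / C₂ * Real.exp (|h| * (T.dist a₁ a₂ + T.dist b₁ b₂)) * T.cylMass μ a₂ b₂ := by
  set d₁ := T.dist a₁ b₁
  set d₂ := T.dist a₂ b₂
  have hC₁ : 0 < C₁ := pos_of_mul_pos_left
    ((T.cylMass_pos hC₂ hbd h₁).trans_le (hbd a₁ b₁ h₁).2) (Real.exp_pos _).le
  have hexp : h * (d₂ - d₁) ≤ |h| * (T.dist a₁ a₂ + T.dist b₁ b₂) :=
    calc h * (d₂ - d₁) ≤ |h| * |d₁ - d₂| := by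
          rw [abs_sub_comm, ← abs_mul]; exact le_abs_self _
      _ ≤ _ := mul_le_mul_of_nonneg_left (T.abs_dist_sub_dist_le a₁ b₁ a₂ b₂) (abs_nonneg h)
  calc T.cylMass μ a₁ b₁ ≤ C₁ * Real.exp (-h * d₁) := (hbd a₁ b₁ h₁).2
    _ = C₁ / C₂ * Real.exp (h * (d₂ - d₁)) * (C₂ * Real.exp (-h * d₂)) := by
      rw [mul_sub, mul_mul_mul_comm, div_mul_cancel₀ _ hC₂.ne', ← Real.exp_add]
      ring_nf
    _ ≤ C₁ / C₂ * Real.exp (|h| * (T.dist a₁ a₂ + T.dist b₁ b₂)) * T.cylMass μ a₂ b₂ := by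
      gcongr
      exact (hbd a₂ b₂ h₂).1

lemma tame_of_cylMassExpBounds (hC₂ : 0 < C₂) (hC₁₂ : C₂ ≤ C₁)
    (hbd : T.CylMassExpBounds μ h C₁ C₂) :
    T.Tame μ := by
  intro M hM
  have hC : 1 ≤ C₁ / C₂ * Real.exp (|h| * (M + M)) :=
    one_le_mul_of_one_le_of_one_le ((one_le_div hC₂).2 hC₁₂) (Real.one_le_exp (by positivity))
  have key : ∀ a₁ b₁ a₂ b₂ : T.X, T.dist a₁ a₂ ≤ M → T.dist b₁ b₂ ≤ M → a₁ ≠ b₁ →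
      a₂ ≠ b₂ → T.cylMass μ a₁ b₁ ≤ C₁ / C₂ * Real.exp (|h| * (M + M)) * T.cylMass μ a₂ b₂ :=
    fun a₁ b₁ a₂ b₂ ha hb h₁ h₂ => (T.cylMass_le_mul_cylMass hC₂ hbd h₁ h₂).trans (by
      have : 0 ≤ C₁ / C₂ := div_nonneg (hC₂.le.trans hC₁₂) hC₂.le
      gcongr
      exact ENNReal.toReal_nonneg)
  refine ⟨_, hC, fun a₁ b₁ a₂ b₂ ha hb h₁ h₂ => ⟨?_, key a₁ b₁ a₂ b₂ ha hb h₁ h₂⟩⟩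
  rw [one_div, inv_mul_le_iff₀ (zero_lt_one.trans_le hC)]
  exact key a₂ b₂ a₁ b₁ (by rwa [T.dist_comm]) (by rwa [T.dist_comm]) h₂ h₁

lemma log_cylMass_mem_Icc (hC₂ : 0 < C₂) (hbd : T.CylMassExpBounds μ h C₁ C₂)
    {x y : T.X} (hxy : x ≠ y) :
    Real.log (T.cylMass μ x y) ∈
      Set.Icc (Real.log C₂ - h * T.dist x y) (Real.log C₁ - h * T.dist x y) := by
  obtain ⟨hlow, hupp⟩ := hbd x y hxy
  have hmass := T.cylMass_pos hC₂ hbd hxy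
  have hC₁ : 0 < C₁ := pos_of_mul_pos_left (hmass.trans_le hupp) (Real.exp_pos _).le
  have hlog : ∀ {C : ℝ}, 0 < C → Real.log (C * Real.exp (-h * T.dist x y)) =
      Real.log C - h * T.dist x y := fun hC => by
    rw [Real.log_mul hC.ne' (Real.exp_ne_zero _), Real.log_exp]
    ring
  constructor
  · rw [← hlog hC₂]
    exact Real.log_le_log (by positivity) hlow
  · rw [← hlog hC₁]
    exact Real.log_le_log hmass hupp

lemma tendsto_neg_log_cylMass_div_dist (hC₂ : 0 < C₂) (hbd : T.CylMassExpBounds μ h C₁ C₂) :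
    Tendsto (fun p : T.X × T.X => -Real.log (T.cylMass μ p.1 p.2) / T.dist p.1 p.2)
      (comap (fun p : T.X × T.X => T.dist p.1 p.2) atTop) (𝓝 h) := by
  have hdist : Tendsto (fun p : T.X × T.X => T.dist p.1 p.2)
      (comap (fun p : T.X × T.X => T.dist p.1 p.2) atTop) atTop := tendsto_comap
  have hlim : ∀ c : ℝ, Tendsto (fun p : T.X × T.X => h - c / T.dist p.1 p.2)
      (comap (fun p : T.X × T.X => T.dist p.1 p.2) atTop) (𝓝 h) := fun c => by
    simpa using tendsto_const_nhds.sub (tendsto_const_nhds.div_atTop hdist)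
  refine tendsto_of_tendsto_of_tendsto_of_le_of_le' (hlim (Real.log C₁)) (hlim (Real.log C₂))
    ?_ ?_ <;>
  · filter_upwards [hdist.eventually_gt_atTop 0] with p hp
    have hlog := T.log_cylMass_mem_Icc hC₂ hbd (T.ne_of_dist_pos hp)
    rw [sub_div' hp.ne']
    gcongr
    linarith [hlog.1, hlog.2]

end CylMassBounds

end CVTree

theorem pattersonSullivan_tame_and_entropy_general {G B : Type} [Group G] [MeasurableSpace B]
    {bact : G → B → B}
    (T : CVTree G B bact) (μ : Measure B) (h : ℝ)
    (hvol : T.HasVolEntropy h) (hPS : T.IsPattersonSullivan μ h) :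
    T.Tame μ ∧ T.geomEntropy μ = h := by
  obtain ⟨-, C₁, C₂, hC₂, hC₁₂, hbd⟩ := hPS
  refine ⟨T.tame_of_cylMassExpBounds hC₂ hC₁₂.le hbd, ?_⟩
  by_cases hub : ∀ R : ℝ, ∃ x y : T.X, R ≤ T.dist x y
  · have hμ : ∀ x y : T.X, x ≠ y → μ (T.cyl x y) ≠ 0 := fun x y hxy hzero =>
      (T.cylMass_pos hC₂ hbd hxy).ne' (by simp [CVTree.cylMass, hzero])
    have := T.neBot_of_dist_unbounded hμ hub
    exact ((T.tendsto_neg_log_cylMass_div_dist hC₂ hbd).mono_left inf_le_left).liminf_eq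
  · push Not at hub
    obtain ⟨D, hD⟩ := hub
    rw [T.geomEntropy_eq_zero_of_dist_lt hD, hvol.eq_zero_of_dist_lt T hD]

/-- A Patterson–Sullivan current `μ_T` for `T ∈ cv(F)` (i.e. a current
whose cylinder masses satisfy the two-sided estimate
`C₂ e^{−h d_T(x,y)} ≤ μ_T(Cyl_{[x,y]}) ≤ C₁ e^{−h d_T(x,y)}` where `h = h(T)` is the
volume entropy) is tame, and `h_T(μ_T) = h(T)`. -/
theorem pattersonSullivan_tame_and_entropy {G B : Type} [Group G] [MeasurableSpace B]
    {bact : G → B → B} (k : ℕ) (hk : 2 ≤ k) (iso : G ≃* FreeGroup (Fin k))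
    (T : CVTree G B bact) (μ : Measure B) (h : ℝ)
    (hvol : T.HasVolEntropy h) (hPS : T.IsPattersonSullivan μ h) :
    T.Tame μ ∧ T.geomEntropy μ = h :=
  pattersonSullivan_tame_and_entropy_general T μ h hvol hPS
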